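/- The generating function Σ_{n≥0} C'(Λ_n, x) y^n equals (1 + y + x y² + x y³ - x y⁴) / (1 - x y²(1+y)), where C'(Λ_n, x) = Σ_{p≥1} (2·binomial(p, n-2p) + binomial(p-1, n-2p-1)) x^p for n ≥ 2, C'(Λ_0,x) = C'(Λ_1,x) = 1. -/

import Mathlib

/-- The hypercube graph `Q_n` on binary strings of length `n`:
two strings are adjacent iff they differ in exactly one coordinate. -/
def Qgraph (n : ℕ) : SimpleGraph (Fin n → Bool) where
  Adj x y := hammingDist x y = 1
  symm := ⟨fun x y (h : hammingDist x y = 1) => by rw [hammingDist_comm]; exact h⟩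
  loopless := ⟨fun x (h : hammingDist x x = 1) => by rw [hammingDist_self] at h; exact absurd h (by omega)⟩

/-- The weight of a binary string: its number of `1`s. -/
def wt {n : ℕ} (x : Fin n → Bool) : ℕ :=
  (Finset.univ.filter fun i => x i = true).card

/-- Fibonacci strings of length `n`: no two (cyclically non-wrapping) consecutive 1's. -/
def fibSet (n : ℕ) : Set (Fin n → Bool) :=
  {s | ∀ i j : Fin n, (j : ℕ) = (i : ℕ) + 1 → ¬(s i = true ∧ s j = true)}

/-- Lucas strings of length `n`: Fibonacci strings whose first and last bits are not both 1. -/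
def lucasSet (n : ℕ) : Set (Fin n → Bool) :=
  {s | s ∈ fibSet n ∧
    ∀ i j : Fin n, (i : ℕ) = 0 → (j : ℕ) = n - 1 → ¬(s i = true ∧ s j = true)}

/-- The binary string `0^{l_0} 1 0^{l_1} 1 ⋯ 1 0^{l_p}` determined by a list
of lengths of blocks of `0`'s. -/
def blockString (l : List ℕ) : List Bool :=
  List.intercalate [true] (l.map fun k => List.replicate k false)

/-- The vertex of `Q_n` corresponding to the string `0^{l_0} 1 0^{l_1} 1 ⋯ 1 0^{l_p}`. -/
def ofBlocks (n : ℕ) (l : List ℕ) : Fin n → Bool :=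
  fun i => (blockString l).getD (i : ℕ) false

/-- `V` induces a maximal hypercube of dimension `p` inside the subgraph of `Q_n`
induced by the vertex set `S`. -/
def IsMaxCube (n p : ℕ) (S : Set (Fin n → Bool)) (V : Set (Fin n → Bool)) : Prop :=
  V ⊆ S ∧ Nonempty ((Qgraph n).induce V ≃g Qgraph p) ∧
    ¬ ∃ V' : Set (Fin n → Bool), V ⊂ V' ∧ V' ⊆ S ∧
      Nonempty ((Qgraph n).induce V' ≃g Qgraph (p + 1))

/-- Binomial coefficient `a` choose `b` with an integer lower argument,
equal to `0` when `b < 0`. -/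
def chooseZ (a : ℕ) (b : ℤ) : ℕ := if 0 ≤ b then a.choose b.toNat else 0


open Polynomial in
/-- The counting polynomial of maximal hypercubes in the Lucas cube `Λ_n`:
for `n ≥ 2` the coefficient of `x^p` (`p ≥ 1`) is
`2 * p.choose (n-2p) + (p-1).choose (n-2p-1)`, and `C'(Λ_0,x) = C'(Λ_1,x) = 1`. -/
noncomputable def lucasCubePoly (n : ℕ) : Polynomial ℤ :=
  if n ≤ 1 then 1 else
    ∑ p ∈ Finset.Icc 1 n,
      C ((2 * chooseZ p ((n : ℤ) - 2 * p) + chooseZ (p - 1) ((n : ℤ) - 2 * p - 1) : ℕ) : ℤ)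
        * X ^ p

lemma chooseZ_neg (a : ℕ) {b : ℤ} (h : b < 0) : chooseZ a b = 0 := by
  simp [chooseZ, not_le.mpr h]

lemma chooseZ_pascal (a : ℕ) (b : ℤ) :
    chooseZ (a + 1) b = chooseZ a b + chooseZ a (b - 1) := by
  rcases lt_trichotomy b 0 with h | h | h
  · rw [chooseZ_neg _ h, chooseZ_neg _ h, chooseZ_neg _ (by omega)]
  · subst h; simp [chooseZ, chooseZ_neg]
  · obtain ⟨k, rfl⟩ : ∃ k : ℕ, b = (k : ℤ) + 1 := ⟨(b - 1).toNat, by omega⟩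
    have h1 : ((k : ℤ) + 1).toNat = k + 1 := by omega
    have h2 : ((k : ℤ) + 1 - 1).toNat = k := by omega
    simp only [chooseZ, h1, h2, if_pos (by omega : (0:ℤ) ≤ (k:ℤ)+1),
      if_pos (by omega : (0:ℤ) ≤ (k:ℤ)+1-1)]
    rw [Nat.choose_succ_succ, Nat.succ_eq_add_one, add_comm]

lemma chooseZ_zero_left {b : ℤ} (h : b ≠ 0) : chooseZ 0 b = 0 := by
  unfold chooseZ
  split
  · obtain ⟨k, rfl⟩ : ∃ k : ℕ, b = (k : ℤ) + 1 := ⟨(b - 1).toNat, by omega⟩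
    rw [show ((k:ℤ)+1).toNat = k + 1 by omega]
    simp [Nat.choose]
  · rfl


def cf (n p : ℕ) : ℕ :=
  2 * chooseZ p ((n : ℤ) - 2 * p) + chooseZ (p - 1) ((n : ℤ) - 2 * p - 1)

lemma cf_eq_zero {n p : ℕ} (h : n < p) : cf n p = 0 := by
  unfold cf
  rw [chooseZ_neg _ (by push_cast; omega), chooseZ_neg _ (by push_cast; omega)]

lemma cf_zero {m : ℕ} (hm : 2 ≤ m) : cf m 0 = 0 := by
  unfold cf
  rw [Nat.zero_sub, chooseZ_zero_left (by push_cast; omega),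
    chooseZ_zero_left (by push_cast; omega)]

lemma coeff_lucas {n : ℕ} (hn : 2 ≤ n) (p : ℕ) :
    (lucasCubePoly n).coeff p = if p = 0 then 0 else (cf n p : ℤ) := by
  rw [lucasCubePoly, if_neg (by omega)]
  rw [Polynomial.finset_sum_coeff]
  simp only [Polynomial.coeff_C_mul, Polynomial.coeff_X_pow, mul_ite, mul_one, mul_zero]
  rw [Finset.sum_ite_eq (Finset.Icc 1 n) p]
  rcases Nat.eq_zero_or_pos p with rfl | hp
  · simp
  by_cases hpn : p ≤ n
  · rw [if_pos (Finset.mem_Icc.mpr ⟨hp, hpn⟩), if_neg (by omega)]; rfl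
  · rw [if_neg (fun h => hpn (Finset.mem_Icc.mp h).2), if_neg (by omega),
      cf_eq_zero (by omega)]; simp

lemma cf_rec {n p : ℕ} (hn : 5 ≤ n) (hp : 1 ≤ p) :
    cf n p = cf (n - 2) (p - 1) + cf (n - 3) (p - 1) := by
  have e2 : ((n - 2 : ℕ) : ℤ) = (n : ℤ) - 2 := by omega
  have e3 : ((n - 3 : ℕ) : ℤ) = (n : ℤ) - 3 := by omega
  rcases Nat.lt_or_ge p 2 with hp2 | hp2
  · interval_cases p
    rw [Nat.sub_self, cf_zero (by omega), cf_zero (by omega)]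
    have h1 : chooseZ 1 ((n:ℤ) - 2) = 0 := by
      simp only [chooseZ, if_pos (by omega : (0:ℤ) ≤ (n:ℤ) - 2)]
      rw [Nat.choose_eq_zero_of_lt (by omega)]
    simp only [cf, Nat.cast_one, mul_one, Nat.sub_self]
    rw [h1, chooseZ_zero_left (by omega)]
  · obtain ⟨q, rfl⟩ : ∃ q, p = q + 2 := ⟨p - 2, by omega⟩
    unfold cf
    simp only [Nat.add_sub_cancel, e2, e3]
    have a1 : (n:ℤ) - 2 - 2*((q:ℤ)+1) = (n:ℤ) - 2*((q:ℤ)+2) := by ring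
    have a2 : (n:ℤ) - 2 - 2*((q:ℤ)+1) - 1 = (n:ℤ) - 2*((q:ℤ)+2) - 1 := by ring
    have a3 : (n:ℤ) - 3 - 2*((q:ℤ)+1) = (n:ℤ) - 2*((q:ℤ)+2) - 1 := by ring
    have a4 : (n:ℤ) - 3 - 2*((q:ℤ)+1) - 1 = (n:ℤ) - 2*((q:ℤ)+2) - 1 - 1 := by ring
    push_cast
    rw [a2, a1, a4, a3]
    set A : ℤ := (n:ℤ) - 2*((q:ℤ)+2) with hA
    have P1 := chooseZ_pascal (q+1) A
    rw [show q+1+1 = q+2 from rfl] at P1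
    rw [P1, chooseZ_pascal q (A-1)]
    ring

lemma lucas_rec {n : ℕ} (hn : 5 ≤ n) :
    lucasCubePoly n = Polynomial.X * lucasCubePoly (n - 2) + Polynomial.X * lucasCubePoly (n - 3) := by
  ext p
  rw [Polynomial.coeff_add]
  rcases Nat.eq_zero_or_pos p with rfl | hp
  · simp [Polynomial.mul_coeff_zero, coeff_lucas (show 2 ≤ n by omega)]
  obtain ⟨r, rfl⟩ : ∃ r, p = r + 1 := ⟨p - 1, by omega⟩
  rw [Polynomial.coeff_X_mul, Polynomial.coeff_X_mul,
    coeff_lucas (show 2 ≤ n by omega), coeff_lucas (show 2 ≤ n - 2 by omega),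
    coeff_lucas (show 2 ≤ n - 3 by omega), if_neg (by omega)]
  rcases Nat.eq_zero_or_pos r with rfl | hr
  · rw [if_pos rfl, if_pos rfl, cf_rec hn (by omega), show (1:ℕ) - 1 = 0 from rfl,
      cf_zero (by omega), cf_zero (by omega)]
    simp
  · rw [if_neg (by omega), if_neg (by omega), cf_rec hn (by omega),
      show r + 1 - 1 = r from rfl]
    push_cast; ring

lemma lucas0 : lucasCubePoly 0 = 1 := by norm_num [lucasCubePoly]
lemma lucas1 : lucasCubePoly 1 = 1 := by norm_num [lucasCubePoly]

lemma lucas2 : lucasCubePoly 2 = 2 * Polynomial.X := by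
  rw [lucasCubePoly, if_neg (by omega), show Finset.Icc 1 2 = {1, 2} from rfl]
  rw [Finset.sum_insert (by decide), Finset.sum_singleton]
  norm_num [chooseZ]

lemma lucas3 : lucasCubePoly 3 = 3 * Polynomial.X := by
  rw [lucasCubePoly, if_neg (by omega), show Finset.Icc 1 3 = {1, 2, 3} from rfl]
  rw [Finset.sum_insert (by decide), Finset.sum_insert (by decide), Finset.sum_singleton]
  norm_num [chooseZ]

lemma lucas4 : lucasCubePoly 4 = 2 * Polynomial.X ^ 2 := by
  rw [lucasCubePoly, if_neg (by omega), show Finset.Icc 1 4 = {1, 2, 3, 4} from rfl]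
  rw [Finset.sum_insert (by decide), Finset.sum_insert (by decide),
    Finset.sum_insert (by decide), Finset.sum_singleton]
  norm_num [chooseZ, Nat.choose]
  decide

open Polynomial PowerSeries in
/-- The generating function `∑ C'(Λ_n, x) yⁿ = (1 + y + xy² + xy³ - xy⁴) / (1 - x y² (1+y))`,
as an identity of formal power series in `y` over `ℤ[x]`. -/
theorem lucasCubePoly_generating_function :
    (1 - (PowerSeries.C : Polynomial ℤ →+* PowerSeries (Polynomial ℤ)) X * PowerSeries.X ^ 2 * (1 + PowerSeries.X)) *
        PowerSeries.mk (fun n => lucasCubePoly n) =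
      1 + PowerSeries.X + (PowerSeries.C : Polynomial ℤ →+* PowerSeries (Polynomial ℤ)) X * PowerSeries.X ^ 2
        + (PowerSeries.C : Polynomial ℤ →+* PowerSeries (Polynomial ℤ)) X * PowerSeries.X ^ 3
        - (PowerSeries.C : Polynomial ℤ →+* PowerSeries (Polynomial ℤ)) X * PowerSeries.X ^ 4 := by
  have expand : (1 - (PowerSeries.C : Polynomial ℤ →+* PowerSeries (Polynomial ℤ)) X * PowerSeries.X ^ 2 * (1 + PowerSeries.X)) *
        PowerSeries.mk (fun n => lucasCubePoly n) =
      PowerSeries.mk (fun n => lucasCubePoly n)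
        - (PowerSeries.C : Polynomial ℤ →+* PowerSeries (Polynomial ℤ)) X * (PowerSeries.X ^ 2 * PowerSeries.mk (fun n => lucasCubePoly n))
        - (PowerSeries.C : Polynomial ℤ →+* PowerSeries (Polynomial ℤ)) X * (PowerSeries.X ^ 3 * PowerSeries.mk (fun n => lucasCubePoly n)) := by
    ring
  rw [expand]
  refine PowerSeries.ext fun n => ?_
  simp only [map_sub, map_add, PowerSeries.coeff_C_mul, PowerSeries.coeff_X_pow_mul',
    PowerSeries.coeff_mk, PowerSeries.coeff_one, PowerSeries.coeff_X, PowerSeries.coeff_X_pow]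
  match n with
  | 0 => norm_num [lucas0]
  | 1 => norm_num [lucas1]
  | 2 => norm_num [lucas2, lucas0]; ring
  | 3 => norm_num [lucas3, lucas1, lucas0]; ring
  | 4 => norm_num [lucas4, lucas2, lucas1]; ring
  | (m + 5) =>
      rw [if_pos (by omega), if_pos (by omega), if_neg (by omega), if_neg (by omega),
        if_neg (by omega), if_neg (by omega), if_neg (by omega)]
      have := lucas_rec (n := m + 5) (by omega)
      rw [show m + 5 - 2 = m + 3 from rfl, show m + 5 - 3 = m + 2 from rfl] at this ⊢
      rw [this]
      ring
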